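/- arXiv:2202.09653 — 3 statements merged into one kernel-verified Lean document; each statement's English description precedes it below -/
import Mathlib

section
/- There exist an absolute constant c > 0 and an integer t₀ such that for every integer t ≥ t₀ the following holds. Let ℬ denote the set of (t+1)³ points {0/t, 1/t, ..., t/t}³ ⊂ ℝ³. For any function F: ℝ³ → {1,2,3}², there are at least c·t⁴ ordered pairs of points (P, Q) ∈ ℬ × ℬ such that: all coordinates of P and Q lie in [0.01, 0.99]; ‖P − Q‖₂ ≤ 1/√t; and (P, Q) is a 0.01-loss for F. -/
open scoped Classical BigOperators

namespace Obstruction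

/-- The Euclidean (ℓ²) norm on ℝ³. -/
noncomputable def enorm (x : Fin 3 → ℝ) : ℝ :=
  Real.sqrt (∑ i : Fin 3, (x i) ^ 2)

/-- `V u`: the sum of the two largest coordinates of `u`,
i.e. the maximum of `u i₁ + u i₂` over pairs of distinct indices. -/
noncomputable def V (u : Fin 3 → ℝ) : ℝ :=
  (Finset.univ.filter (fun q : Fin 3 × Fin 3 => q.1 ≠ q.2)).sup'
    ⟨(0, 1), by decide⟩ (fun q => u q.1 + u q.2)

/-- The gain `G(F, u, u')`: writing `F u = (i, j)` and `F u' = (i', j')`, it is `0` if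
`i = j'` and `u i + u j'` otherwise. -/
noncomputable def G (F : (Fin 3 → ℝ) → Fin 3 × Fin 3) (u u' : Fin 3 → ℝ) : ℝ :=
  if (F u).1 = (F u').2 then 0 else u (F u).1 + u (F u').2

end Obstruction

namespace Obstruction

/-- The grid point of `{0/t, 1/t, …, t/t}³` indexed by `a : Fin 3 → Fin (t+1)`. -/
noncomputable def gridPt (t : ℕ) (a : Fin 3 → Fin (t + 1)) : Fin 3 → ℝ :=
  fun i => (a i : ℝ) / t

end Obstruction

/-!
Label a point `P` by `ι P = (F P).1`. Suppose `(P, W)` and `(P', W)` are both non-losses, all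
coordinates are at least `0.01`, and `P`, `P'` have the same coordinate `M` as strict maximum
(resp. `m` as strict minimum) by a margin `0.01`. Then `ι P = M ↔ ι P' = M` (resp.
`ι P = ι P' ≠ m`). Run around the hexagon through the permutations of `(2D, D, 0)`, `D ≈ t/4`: its
sides alternately keep the maximum and the minimum coordinate fixed. On a side fixing the minimum
the label keeps its index while the two top coordinates swap, so "`ι` points at the largest
coordinate" flips on exactly three sides, and a closed chain of such linked points cannot exist.

Cover a translate of the hexagon by `≈ 6√t` cubes of side `n ≈ √t/4`, so `K = n³` points each. If
no two consecutive cubes carry `K²/4` losses between them, each cube contains a point losing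
against fewer than half of its own cube and of the next one, and consecutive such points share a
non-loss witness: a forbidden closed chain. So each of the `≈ t³` translates has a window with
`≳ t³` losses, while a pair of points lies in the windows of at most `(6√t + 1) K ≈ t²`
translates, giving `≳ t⁴` losses.
-/

open Finset

namespace Obstruction

def IsLoss (F : (Fin 3 → ℝ) → Fin 3 × Fin 3) (γ : ℝ) (P Q : Fin 3 → ℝ) : Prop :=
  γ ≤ V P - G F P Q

def IsMaxBy {ι α : Type*} [Add α] [LE α] (δ : α) (u : ι → α) (M : ι) : Prop :=
  ∀ j, j ≠ M → u j + δ ≤ u M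

def IsMinBy {ι α : Type*} [Add α] [LE α] (δ : α) (u : ι → α) (m : ι) : Prop :=
  ∀ j, j ≠ m → u m + δ ≤ u j

section Points

variable {F : (Fin 3 → ℝ) → Fin 3 × Fin 3} {γ : ℝ} {u u' w : Fin 3 → ℝ} {m M : Fin 3}

theorem add_le_V (u : Fin 3 → ℝ) {i j : Fin 3} (h : i ≠ j) : u i + u j ≤ V u :=
  Finset.le_sup' (fun q : Fin 3 × Fin 3 => u q.1 + u q.2) (b := (i, j)) (by simp [h])

theorem le_V (hγ : 0 ≤ γ) (hu : ∀ i, γ ≤ u i) : γ ≤ V u := by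
  linarith [add_le_V u (show (0 : Fin 3) ≠ 1 by decide), hu 0, hu 1]

theorem exists_ne_ne (x y : Fin 3) : ∃ z, z ≠ x ∧ z ≠ y := by
  revert x y; decide

theorem fst_ne_snd_of_not_isLoss (hV : γ ≤ V u) (h : ¬IsLoss F γ u w) :
    (F u).1 ≠ (F w).2 := by
  intro heq
  simp only [IsLoss, G, if_pos heq, sub_zero] at h
  exact h hV

theorem not_isLoss_iff_of_ne (h : (F u).1 ≠ (F w).2) :
    ¬IsLoss F γ u w ↔ V u < u (F u).1 + u (F w).2 + γ := by
  simp only [IsLoss, G, if_neg h, not_le]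
  constructor <;> intro h <;> linarith

theorem fst_ne_and_snd_ne_of_isMinBy (hV : γ ≤ V u) (hm : IsMinBy γ u m)
    (h : ¬IsLoss F γ u w) : (F u).1 ≠ m ∧ (F w).2 ≠ m := by
  have hne := fst_ne_snd_of_not_isLoss hV h
  rw [not_isLoss_iff_of_ne hne] at h
  constructor
  · rintro rfl
    obtain ⟨ℓ, hℓm, hℓj⟩ := exists_ne_ne (F u).1 (F w).2
    linarith [add_le_V u hℓj, hm ℓ hℓm]
  · intro hj
    obtain ⟨ℓ, hℓm, hℓi⟩ := exists_ne_ne m (F u).1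
    rw [hj] at h
    linarith [add_le_V u (Ne.symm hℓi), hm ℓ hℓm]

theorem fst_eq_iff_snd_ne_of_isMaxBy (hV : γ ≤ V u) (hM : IsMaxBy γ u M)
    (h : ¬IsLoss F γ u w) : (F u).1 = M ↔ (F w).2 ≠ M := by
  have hne := fst_ne_snd_of_not_isLoss hV h
  rw [not_isLoss_iff_of_ne hne] at h
  refine ⟨fun hi hj => hne (hi.trans hj.symm), fun hj => ?_⟩
  by_contra hi
  linarith [add_le_V u (Ne.symm hj), hM _ hi]

theorem fst_eq_fst_of_isMinBy (hV : γ ≤ V u) (hV' : γ ≤ V u')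
    (hm : IsMinBy γ u m) (hm' : IsMinBy γ u' m)
    (h : ¬IsLoss F γ u w) (h' : ¬IsLoss F γ u' w) : (F u).1 = (F u').1 ∧ (F u).1 ≠ m := by
  obtain ⟨hi, hj⟩ := fst_ne_and_snd_ne_of_isMinBy hV hm h
  have hi' := (fst_ne_and_snd_ne_of_isMinBy hV' hm' h').1
  have := fst_ne_snd_of_not_isLoss hV h
  have := fst_ne_snd_of_not_isLoss hV' h'
  exact ⟨by omega, hi⟩

theorem fst_eq_iff_fst_eq_of_isMaxBy (hV : γ ≤ V u) (hV' : γ ≤ V u')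
    (hM : IsMaxBy γ u M) (hM' : IsMaxBy γ u' M)
    (h : ¬IsLoss F γ u w) (h' : ¬IsLoss F γ u' w) : (F u).1 = M ↔ (F u').1 = M := by
  rw [fst_eq_iff_snd_ne_of_isMaxBy hV hM h, fst_eq_iff_snd_ne_of_isMaxBy hV' hM' h']

end Points

section Counting

variable {α β : Type*}

theorem card_filter_product_eq_sum (A : Finset α) (B : Finset β) (R : α → β → Prop) :
    #{p ∈ A ×ˢ B | R p.1 p.2} = ∑ a ∈ A, #{b ∈ B | R a b} := by
  simp only [card_filter, sum_product]

theorem card_filter_mul_le_sum (A : Finset α) (f : α → ℕ) (m : ℕ) :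
    #{a ∈ A | m ≤ f a} * m ≤ ∑ a ∈ A, f a :=
  calc #{a ∈ A | m ≤ f a} * m = ∑ a ∈ A with m ≤ f a, m := by rw [sum_const, smul_eq_mul]
    _ ≤ ∑ a ∈ A with m ≤ f a, f a := sum_le_sum fun a ha => (mem_filter.1 ha).2
    _ ≤ ∑ a ∈ A, f a := sum_le_sum_of_subset (filter_subset _ _)

theorem exists_mem_not_and_not (s : Finset α) (P Q : α → Prop)
    (h : #{a ∈ s | P a} + #{a ∈ s | Q a} < #s) : ∃ a ∈ s, ¬P a ∧ ¬Q a := by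
  have hlt : #{a ∈ s | P a ∨ Q a} < #s := by
    rw [filter_or]; exact (card_union_le _ _).trans_lt h
  obtain ⟨a, ha, hPQ⟩ :=
    filter_ssubset.1 ((filter_subset _ s).ssubset_of_ne fun heq => hlt.ne (congrArg card heq))
  exact ⟨a, ha, fun hP => hPQ (Or.inl hP), fun hQ => hPQ (Or.inr hQ)⟩

theorem exists_mem_few_related (R : α → α → Prop) {A B₁ B₂ W : Finset α} {K : ℕ}
    (hA : A ⊆ W) (h₁ : B₁ ⊆ W) (h₂ : B₂ ⊆ W) (h : 4 * #{p ∈ W ×ˢ W | R p.1 p.2} < K * #A) :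
    ∃ a ∈ A, 2 * #{b ∈ B₁ | R a b} < K ∧ 2 * #{b ∈ B₂ | R a b} < K := by
  have markov : ∀ B ⊆ W,
      #{a ∈ A | K ≤ 2 * #{b ∈ B | R a b}} * K ≤ 2 * #{p ∈ W ×ˢ W | R p.1 p.2} := fun B hB =>
    calc _ ≤ ∑ a ∈ A, 2 * #{b ∈ B | R a b} := card_filter_mul_le_sum _ _ _
      _ = 2 * #{p ∈ A ×ˢ B | R p.1 p.2} := by rw [card_filter_product_eq_sum, mul_sum]
      _ ≤ _ := by gcongr
  obtain ⟨a, ha, h1, h2⟩ := exists_mem_not_and_not A (fun a => K ≤ 2 * #{b ∈ B₁ | R a b})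
    (fun a => K ≤ 2 * #{b ∈ B₂ | R a b}) <| Nat.lt_of_mul_lt_mul_right
    (a := K) (by rw [add_mul]; linarith [markov B₁ h₁, markov B₂ h₂])
  exact ⟨a, ha, not_le.1 h1, not_le.1 h2⟩

end Counting

-- On side `s` of the hexagon, coordinate `s mod 3` is the strict maximum if `s` is even and the
-- strict minimum if `s` is odd; `HexRule s` is what this forces on the labels of linked points.
def HexRule (s : ℕ) (a b : Fin 3) : Prop :=
  if Even s then (a = Fin.ofNat 3 s ↔ b = Fin.ofNat 3 s) else a = b ∧ a ≠ Fin.ofNat 3 s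

instance (s : ℕ) : IsTrans (Fin 3) (HexRule s) where
  trans a b c hab hbc := by
    unfold HexRule at *
    split_ifs at * with hs
    · exact hab.trans hbc
    · exact ⟨hab.1.trans hbc.1, hab.2⟩

theorem rel_of_forall_rel_succ_of_mem_Ico {β : Type*} (r : β → β → Prop) [IsTrans β r]
    {f : ℕ → β} {a b : ℕ} (hab : a < b) (h : ∀ k, a ≤ k → k < b → r (f k) (f (k + 1))) :
    r (f a) (f b) := by
  induction b, hab using Nat.le_induction with
  | base => exact h a le_rfl (lt_add_one a)
  | succ b hb ih =>
    exact _root_.trans (ih fun k hk hkb => h k hk (by omega)) (h b (by omega) (lt_add_one b))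

theorem hexRule_cycle (a₀ a₁ a₂ a₃ a₄ a₅ : Fin 3) (h₀ : HexRule 0 a₀ a₁) (h₁ : HexRule 1 a₁ a₂)
    (h₂ : HexRule 2 a₂ a₃) (h₃ : HexRule 3 a₃ a₄) (h₄ : HexRule 4 a₄ a₅)
    (h₅ : HexRule 5 a₅ a₀) : False := by
  rw [HexRule, if_pos (by decide)] at h₀ h₂ h₄
  rw [HexRule, if_neg (by decide)] at h₁ h₃ h₅
  revert a₀ a₁ a₂ a₃ a₄ a₅
  decide

theorem not_hexRule_loop {q : ℕ} (hq : 0 < q) (g : ℕ → Fin 3)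
    (hstep : ∀ k < 6 * q, HexRule (k / q) (g k) (g (k + 1))) (hclosed : g (6 * q) = g 0) :
    False := by
  have hside : ∀ s < 6, HexRule s (g (s * q)) (g ((s + 1) * q)) := fun s hs =>
    rel_of_forall_rel_succ_of_mem_Ico _ (by nlinarith) fun k hk hk' => by
      have := hstep k (by nlinarith)
      rwa [Nat.div_eq_of_lt_le (by linarith) hk'] at this
  have h5 := hside 5 (by norm_num)
  rw [show (5 + 1) * q = 6 * q by ring, hclosed] at h5
  exact hexRule_cycle _ _ _ _ _ _ (by simpa using hside 0 (by norm_num))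
    (hside 1 (by norm_num)) (hside 2 (by norm_num)) (hside 3 (by norm_num))
    (hside 4 (by norm_num)) h5

-- Side `s` runs from the `s`-th to the `(s+1)`-th of the corners `(2D, D, 0)`, `(2D, 0, D)`,
-- `(D, 0, 2D)`, `(0, D, 2D)`, `(0, 2D, D)`, `(D, 2D, 0)`.
def hexSide (D : ℕ) : ℕ → ℕ → Fin 3 → ℕ
  | 0, x => ![2 * D, D - x, x]
  | 1, x => ![2 * D - x, 0, D + x]
  | 2, x => ![D - x, x, 2 * D]
  | 3, x => ![0, D + x, 2 * D - x]
  | 4, x => ![x, 2 * D, D - x]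
  | _, x => ![D + x, 2 * D - x, 0]

def hexLoop (q n k : ℕ) : Fin 3 → ℕ := hexSide (q * n) (k % (6 * q) / q) (k % q * n)

section HexagonGeometry

variable {D x n s : ℕ}

theorem hexSide_le (hx : x ≤ D) (i : Fin 3) : hexSide D s x i ≤ 2 * D := by
  match s with
  | 0 | 1 | 2 | 3 | 4 | _ + 5 => fin_cases i <;> simp [hexSide] <;> omega

theorem hexSide_adjacent (hx : x + n ≤ D) (i : Fin 3) :
    hexSide D s (x + n) i ≤ hexSide D s x i + n ∧
      hexSide D s x i ≤ hexSide D s (x + n) i + n := by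
  match s with
  | 0 | 1 | 2 | 3 | 4 | _ + 5 => fin_cases i <;> simp [hexSide] <;> omega

theorem hexSide_isMaxBy (hs : s < 6) (he : Even s) (hx : x ≤ D) :
    IsMaxBy D (hexSide D s x) (Fin.ofNat 3 s) := by
  intro j hj
  interval_cases s
  all_goals first
    | exact absurd he (by decide)
    | fin_cases j <;> simp [hexSide, Fin.ofNat] at hj ⊢
  all_goals omega

theorem hexSide_isMinBy (hs : s < 6) (ho : ¬Even s) (hx : x ≤ D) :
    IsMinBy D (hexSide D s x) (Fin.ofNat 3 s) := by
  intro j hj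
  interval_cases s
  all_goals first
    | exact absurd (by decide) ho
    | fin_cases j <;> simp [hexSide, Fin.ofNat] at hj ⊢
  all_goals omega

theorem hexSide_succ_zero (hs : s < 6) : hexSide D ((s + 1) % 6) 0 = hexSide D s D := by
  interval_cases s <;> (ext i; fin_cases i <;> simp [hexSide] <;> omega)

theorem hexLoop_mod (q n k : ℕ) : hexLoop q n (k % (6 * q)) = hexLoop q n k := by
  rw [hexLoop, hexLoop, Nat.mod_mod, Nat.mod_mod_of_dvd k (dvd_mul_left q 6)]

theorem hexLoop_le {q : ℕ} (hq : 0 < q) (k : ℕ) (i : Fin 3) : hexLoop q n k i ≤ 2 * (q * n) :=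
  hexSide_le (Nat.mul_le_mul_right n (Nat.mod_lt k hq).le) i

theorem hexLoop_consecutive {q k : ℕ} (hq : 0 < q) (hk : k < 6 * q) :
    ∃ x, x + n ≤ q * n ∧ hexLoop q n k = hexSide (q * n) (k / q) x ∧
      hexLoop q n (k + 1) = hexSide (q * n) (k / q) (x + n) := by
  obtain ⟨s, r, rfl, hr⟩ : ∃ s r, k = q * s + r ∧ r < q :=
    ⟨k / q, k % q, (Nat.div_add_mod k q).symm, Nat.mod_lt k hq⟩
  have hs : s < 6 := by nlinarith
  have hdiv : (q * s + r) / q = s := by rw [Nat.mul_add_div hq, Nat.div_eq_of_lt hr, add_zero]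
  have hmod : (q * s + r) % q = r := by rw [Nat.mul_add_mod, Nat.mod_eq_of_lt hr]
  refine ⟨r * n, by rw [← Nat.succ_mul]; exact Nat.mul_le_mul_right n hr, ?_, ?_⟩
  · rw [hexLoop, Nat.mod_eq_of_lt hk, hdiv, hmod]
  rw [hdiv, ← Nat.succ_mul]
  rcases Nat.lt_or_ge (r + 1) q with hr' | hr'
  · have hdiv' : (q * s + r + 1) / q = s := by
      rw [add_assoc, Nat.mul_add_div hq, Nat.div_eq_of_lt hr', add_zero]
    have hmod' : (q * s + r + 1) % q = r + 1 := by
      rw [add_assoc, Nat.mul_add_mod, Nat.mod_eq_of_lt hr']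
    rw [hexLoop, Nat.mod_eq_of_lt (by nlinarith), hdiv', hmod']
  · have hk1 : q * s + r + 1 = q * (s + 1) := by rw [mul_add, mul_one]; omega
    rw [hexLoop, hk1, mul_comm 6 q, Nat.mul_mod_mul_left, Nat.mul_div_cancel_left _ hq,
      Nat.mul_mod_right, zero_mul, hexSide_succ_zero hs, show r.succ = q by omega]

end HexagonGeometry

def side (t : ℕ) : ℕ := Nat.sqrt t / 4

def shift (t : ℕ) : ℕ := t / 10

def loopPt (t k : ℕ) : Fin 3 → ℕ := hexLoop (Nat.sqrt t) (side t) k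

def jitters (t : ℕ) : Finset (Fin 3 → ℕ) := Fintype.piFinset fun _ => range (side t)

def shifts (t : ℕ) : Finset (Fin 3 → ℕ) :=
  Fintype.piFinset fun _ => Ico (shift t) (2 * shift t)

def cube (t : ℕ) (v : Fin 3 → ℕ) (k : ℕ) : Finset (Fin 3 → ℕ) :=
  (jitters t).image fun w => loopPt t k + v + w

def window (t : ℕ) (v : Fin 3 → ℕ) (k : ℕ) : Finset (Fin 3 → ℕ) :=
  cube t v k ∪ cube t v (k + 1)

noncomputable def natPt (t : ℕ) (a : Fin 3 → ℕ) : Fin 3 → ℝ := fun i => (a i : ℝ) / t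

noncomputable def windowLosses (F : (Fin 3 → ℝ) → Fin 3 × Fin 3) (t : ℕ) (v : Fin 3 → ℕ)
    (k : ℕ) : Finset ((Fin 3 → ℕ) × (Fin 3 → ℕ)) :=
  {p ∈ window t v k ×ˢ window t v k | IsLoss F 0.01 (natPt t p.1) (natPt t p.2)}

section NatPt

variable {t : ℕ} {a b : Fin 3 → ℕ}

theorem natPt_mem_Icc (ht : 0 < t) {i : Fin 3} (hlo : t ≤ 100 * a i)
    (hhi : 100 * a i ≤ 99 * t) : natPt t a i ∈ Set.Icc (0.01 : ℝ) 0.99 := by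
  have ht' : (0 : ℝ) < t := by exact_mod_cast ht
  have hlo' : (t : ℝ) ≤ 100 * a i := by exact_mod_cast hlo
  have hhi' : 100 * (a i : ℝ) ≤ 99 * t := by exact_mod_cast hhi
  constructor
  · rw [natPt, le_div_iff₀ ht']; linarith
  · rw [natPt, div_le_iff₀ ht']; linarith

theorem natPt_add_le (ht : 0 < t) {i j : Fin 3} (h : 100 * a j + t ≤ 100 * a i) :
    natPt t a j + 0.01 ≤ natPt t a i := by
  have ht' : (0 : ℝ) < t := by exact_mod_cast ht
  have h' : 100 * (a j : ℝ) + t ≤ 100 * a i := by exact_mod_cast h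
  rw [natPt, natPt, div_add' _ _ _ ht'.ne', div_le_div_iff_of_pos_right ht']
  linarith

theorem enorm_natPt_sub_le (ht : 0 < t) {d : ℕ} (hd : 3 * d ^ 2 ≤ t)
    (h : ∀ i, a i ≤ b i + d ∧ b i ≤ a i + d) :
    enorm (natPt t a - natPt t b) ≤ 1 / Real.sqrt t := by
  have ht' : (0 : ℝ) < t := by exact_mod_cast ht
  have hd' : 3 * (d : ℝ) ^ 2 ≤ t := by exact_mod_cast hd
  have hcoord : ∀ i, (natPt t a - natPt t b) i ^ 2 ≤ (d : ℝ) ^ 2 / t ^ 2 := fun i => by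
    have h1 : (a i : ℝ) ≤ b i + d := by exact_mod_cast (h i).1
    have h2 : (b i : ℝ) ≤ a i + d := by exact_mod_cast (h i).2
    rw [Pi.sub_apply, natPt, natPt, ← sub_div, div_pow]
    exact div_le_div_of_nonneg_right (sq_le_sq' (by linarith) (by linarith)) (by positivity)
  rw [enorm, one_div, ← Real.sqrt_inv]
  apply Real.sqrt_le_sqrt
  calc ∑ i, (natPt t a - natPt t b) i ^ 2 ≤ ∑ _i : Fin 3, (d : ℝ) ^ 2 / t ^ 2 :=
        sum_le_sum fun i _ => hcoord i
    _ = 3 * (d : ℝ) ^ 2 / t ^ 2 := by simp; ring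
    _ ≤ t / t ^ 2 := by gcongr
    _ = (t : ℝ)⁻¹ := by field_simp

end NatPt

section Cubes

variable {t : ℕ} {v a b : Fin 3 → ℕ} {k : ℕ}

theorem sqrt_bounds (ht : 10 ^ 4 ≤ t) :
    100 ≤ Nat.sqrt t ∧ 100 * Nat.sqrt t ≤ t ∧ 4 * (Nat.sqrt t * side t) ≤ t ∧
      t ≤ 4 * (Nat.sqrt t * side t) + 5 * Nat.sqrt t ∧ 3 * (2 * side t) ^ 2 ≤ t := by
  have hlo := Nat.sqrt_le' t
  have hhi := Nat.lt_succ_sqrt' t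
  have h100 : 100 ≤ Nat.sqrt t := Nat.le_sqrt.2 (by omega)
  have hside : Nat.sqrt t ≤ 4 * side t + 3 ∧ 4 * side t ≤ Nat.sqrt t := by
    unfold side; omega
  refine ⟨h100, by nlinarith, by nlinarith, by nlinarith, by nlinarith⟩

theorem mem_cube : a ∈ cube t v k ↔ ∃ w, (∀ i, w i < side t) ∧ a = loopPt t k + v + w := by
  simp [cube, jitters, eq_comm]

theorem card_jitters : #(jitters t) = side t ^ 3 := by
  simp [jitters, Fintype.card_piFinset]

theorem card_cube : #(cube t v k) = side t ^ 3 := by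
  rw [cube, card_image_of_injective _ (add_right_injective _), card_jitters]

theorem cube_mod : cube t v (k % (6 * Nat.sqrt t)) = cube t v k := by
  simp only [cube, loopPt, hexLoop_mod]

theorem mem_cube_bounds (ht : 10 ^ 4 ≤ t) (hv : v ∈ shifts t) (ha : a ∈ cube t v k)
    (i : Fin 3) : t ≤ 100 * a i ∧ 100 * a i ≤ 99 * t := by
  obtain ⟨w, hw, rfl⟩ := mem_cube.1 ha
  have hvi := Finset.mem_Ico.1 (Fintype.mem_piFinset.1 hv i)
  have hloop := hexLoop_le (n := side t) (Nat.sqrt_pos.2 (by omega : 0 < t)) k i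
  have := sqrt_bounds ht
  have := hw i
  simp only [Pi.add_apply, loopPt] at *
  unfold shift side at *
  omega

theorem natPt_add_le_of_mem_cube (ht : 10 ^ 4 ≤ t) (hv : v ∈ shifts t) (ha : a ∈ cube t v k)
    {i j : Fin 3} (h : loopPt t k j + Nat.sqrt t * side t ≤ loopPt t k i) :
    natPt t a j + 0.01 ≤ natPt t a i := by
  refine natPt_add_le (by omega) ?_
  obtain ⟨w, hw, rfl⟩ := mem_cube.1 ha
  have hvi := Finset.mem_Ico.1 (Fintype.mem_piFinset.1 hv i)
  have hvj := Finset.mem_Ico.1 (Fintype.mem_piFinset.1 hv j)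
  have := sqrt_bounds ht
  have := hw j
  simp only [Pi.add_apply] at *
  unfold shift side at *
  omega

theorem isMaxBy_natPt (ht : 10 ^ 4 ≤ t) (hv : v ∈ shifts t) (ha : a ∈ cube t v k) {M : Fin 3}
    (h : IsMaxBy (Nat.sqrt t * side t) (loopPt t k) M) : IsMaxBy 0.01 (natPt t a) M :=
  fun j hj => natPt_add_le_of_mem_cube ht hv ha (h j hj)

theorem isMinBy_natPt (ht : 10 ^ 4 ≤ t) (hv : v ∈ shifts t) (ha : a ∈ cube t v k) {m : Fin 3}
    (h : IsMinBy (Nat.sqrt t * side t) (loopPt t k) m) : IsMinBy 0.01 (natPt t a) m :=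
  fun j hj => natPt_add_le_of_mem_cube ht hv ha (h j hj)

theorem loopPt_adjacent (ht : 10 ^ 4 ≤ t) (hk : k < 6 * Nat.sqrt t) (i : Fin 3) :
    loopPt t (k + 1) i ≤ loopPt t k i + side t ∧ loopPt t k i ≤ loopPt t (k + 1) i + side t := by
  obtain ⟨x, hx, h0, h1⟩ :=
    hexLoop_consecutive (n := side t) (Nat.sqrt_pos.2 (by omega : 0 < t)) hk
  rw [loopPt, loopPt, h0, h1]
  exact hexSide_adjacent hx i

theorem enorm_sub_le_of_mem_window (ht : 10 ^ 4 ≤ t) (hk : k < 6 * Nat.sqrt t)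
    (ha : a ∈ window t v k) (hb : b ∈ window t v k) :
    enorm (natPt t a - natPt t b) ≤ 1 / Real.sqrt t := by
  refine enorm_natPt_sub_le (by omega) (sqrt_bounds ht).2.2.2.2 fun i => ?_
  have hadj := loopPt_adjacent ht hk i
  rcases mem_union.1 ha with ha | ha <;> rcases mem_union.1 hb with hb | hb <;>
  · obtain ⟨w, hw, rfl⟩ := mem_cube.1 ha
    obtain ⟨w', hw', rfl⟩ := mem_cube.1 hb
    have := hw i
    have := hw' i
    simp only [Pi.add_apply]
    omega

end Cubes

section Loop

variable {F : (Fin 3 → ℝ) → Fin 3 × Fin 3} {t : ℕ} {v a b : Fin 3 → ℕ} {k : ℕ}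

theorem le_V_natPt (ht : 10 ^ 4 ≤ t) (hv : v ∈ shifts t) (ha : a ∈ cube t v k) :
    0.01 ≤ V (natPt t a) :=
  le_V (by norm_num) fun i =>
    (natPt_mem_Icc (by omega) (mem_cube_bounds ht hv ha i).1 (mem_cube_bounds ht hv ha i).2).1

theorem hexRule_of_not_isLoss (ht : 10 ^ 4 ≤ t) (hv : v ∈ shifts t) (hk : k < 6 * Nat.sqrt t)
    (ha : a ∈ cube t v k) (hb : b ∈ cube t v (k + 1)) {w : Fin 3 → ℝ}
    (hwa : ¬IsLoss F 0.01 (natPt t a) w) (hwb : ¬IsLoss F 0.01 (natPt t b) w) :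
    HexRule (k / Nat.sqrt t) (F (natPt t a)).1 (F (natPt t b)).1 := by
  have hs : k / Nat.sqrt t < 6 := Nat.div_lt_of_lt_mul (by linarith)
  obtain ⟨x, hx, h0, h1⟩ :=
    hexLoop_consecutive (n := side t) (Nat.sqrt_pos.2 (by omega : 0 < t)) hk
  have hVa := le_V_natPt ht hv ha
  have hVb := le_V_natPt ht hv hb
  by_cases he : Even (k / Nat.sqrt t)
  · rw [HexRule, if_pos he]
    refine fst_eq_iff_fst_eq_of_isMaxBy hVa hVb (isMaxBy_natPt ht hv ha ?_)
      (isMaxBy_natPt ht hv hb ?_) hwa hwb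
    · rw [loopPt, h0]; exact hexSide_isMaxBy hs he (by omega)
    · rw [loopPt, h1]; exact hexSide_isMaxBy hs he hx
  · rw [HexRule, if_neg he]
    refine fst_eq_fst_of_isMinBy hVa hVb (isMinBy_natPt ht hv ha ?_)
      (isMinBy_natPt ht hv hb ?_) hwa hwb
    · rw [loopPt, h0]; exact hexSide_isMinBy hs he (by omega)
    · rw [loopPt, h1]; exact hexSide_isMinBy hs he hx

theorem not_linked_loop (ht : 10 ^ 4 ≤ t) (hv : v ∈ shifts t) (P : ℕ → Fin 3 → ℕ)
    (hP : ∀ k ≤ 6 * Nat.sqrt t, P k ∈ cube t v k) (hclosed : P (6 * Nat.sqrt t) = P 0)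
    (hlinked : ∀ k < 6 * Nat.sqrt t, ∃ w,
      ¬IsLoss F 0.01 (natPt t (P k)) w ∧ ¬IsLoss F 0.01 (natPt t (P (k + 1))) w) : False :=
  not_hexRule_loop (Nat.sqrt_pos.2 (by omega : 0 < t)) (fun k => (F (natPt t (P k))).1)
    (fun k hk => by
      obtain ⟨w, hwa, hwb⟩ := hlinked k hk
      exact hexRule_of_not_isLoss ht hv hk (hP k hk.le) (hP (k + 1) hk) hwa hwb)
    (by rw [hclosed])

theorem exists_heavy_window (ht : 10 ^ 4 ≤ t) (hv : v ∈ shifts t) :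
    ∃ k < 6 * Nat.sqrt t, side t ^ 3 * side t ^ 3 ≤ 4 * #(windowLosses F t v k) := by
  set L := 6 * Nat.sqrt t
  set R : (Fin 3 → ℕ) → (Fin 3 → ℕ) → Prop := fun a b => IsLoss F 0.01 (natPt t a) (natPt t b)
  by_contra! hlight
  have hgood : ∀ k < L, ∃ a ∈ cube t v k, 2 * #{b ∈ cube t v k | R a b} < side t ^ 3 ∧
      2 * #{b ∈ cube t v (k + 1) | R a b} < side t ^ 3 :=
    fun k hk => exists_mem_few_related R subset_union_left subset_union_left subset_union_right
      (by rw [card_cube]; exact hlight k hk)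
  choose! P hPmem hPgood using hgood
  have hL : 0 < L := by have := (sqrt_bounds ht).1; omega
  refine not_linked_loop (F := F) ht hv (fun k => P (k % L)) (fun k hk => ?_) (by simp [L])
    fun k hk => ?_
  · rw [← cube_mod]; exact hPmem _ (Nat.mod_lt _ hL)
  · have hcur := (hPgood k hk).2
    have hnext := (hPgood _ (Nat.mod_lt (k + 1) hL)).1
    rw [cube_mod] at hnext
    rw [Nat.mod_eq_of_lt hk]
    obtain ⟨w, -, hw, hw'⟩ := exists_mem_not_and_not (cube t v (k + 1)) (R (P k))
      (R (P ((k + 1) % L))) (by rw [card_cube]; omega)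
    exact ⟨natPt t w, hw, hw'⟩

end Loop

noncomputable def gridLossPairs (t : ℕ) (F : (Fin 3 → ℝ) → Fin 3 × Fin 3) :
    Finset ((Fin 3 → Fin (t + 1)) × (Fin 3 → Fin (t + 1))) :=
  (Finset.univ : Finset ((Fin 3 → Fin (t + 1)) × (Fin 3 → Fin (t + 1)))).filter
    (fun ab =>
      (∀ i, gridPt t ab.1 i ∈ Set.Icc (0.01 : ℝ) 0.99) ∧
      (∀ i, gridPt t ab.2 i ∈ Set.Icc (0.01 : ℝ) 0.99) ∧
      enorm (gridPt t ab.1 - gridPt t ab.2) ≤ 1 / Real.sqrt t ∧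
      V (gridPt t ab.1) - G F (gridPt t ab.1) (gridPt t ab.2) ≥ 0.01)

def gridVal {t : ℕ} (a : Fin 3 → Fin (t + 1)) : Fin 3 → ℕ := fun i => a i

section DoubleCounting

variable {F : (Fin 3 → ℝ) → Fin 3 × Fin 3} {t : ℕ} {v a : Fin 3 → ℕ} {k : ℕ}

theorem mem_window_bounds (ht : 10 ^ 4 ≤ t) (hv : v ∈ shifts t) (ha : a ∈ window t v k)
    (i : Fin 3) : t ≤ 100 * a i ∧ 100 * a i ≤ 99 * t := by
  rcases mem_union.1 ha with ha | ha <;> exact mem_cube_bounds ht hv ha i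

theorem windowLosses_subset (ht : 10 ^ 4 ≤ t) (hv : v ∈ shifts t) (hk : k < 6 * Nat.sqrt t) :
    windowLosses F t v k ⊆ (gridLossPairs t F).image fun p => (gridVal p.1, gridVal p.2) := by
  intro x hx
  obtain ⟨hx12, hloss⟩ := mem_filter.1 hx
  obtain ⟨ha, hb⟩ := mem_product.1 hx12
  have hA := mem_window_bounds ht hv ha
  have hB := mem_window_bounds ht hv hb
  refine mem_image.2
    ⟨(fun i => ⟨x.1 i, by have := hA i; omega⟩, fun i => ⟨x.2 i, by have := hB i; omega⟩),
    mem_filter.2 ⟨mem_univ _, fun i => natPt_mem_Icc (by omega) (hA i).1 (hA i).2,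
      fun i => natPt_mem_Icc (by omega) (hB i).1 (hB i).2,
      enorm_sub_le_of_mem_window ht hk ha hb, hloss⟩, rfl⟩

theorem card_shifts_filter_le (x : (Fin 3 → ℕ) × (Fin 3 → ℕ)) :
    #{v ∈ shifts t | ∃ k < 6 * Nat.sqrt t, x ∈ windowLosses F t v k} ≤
      (6 * Nat.sqrt t + 1) * side t ^ 3 := by
  calc _ ≤ #((range (6 * Nat.sqrt t + 1) ×ˢ jitters t).image
          fun jw => x.1 - loopPt t jw.1 - jw.2) := by
        refine card_le_card fun v hv => ?_
        obtain ⟨-, k, hk, hx⟩ := mem_filter.1 hv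
        have hmem : ∃ j ≤ 6 * Nat.sqrt t, x.1 ∈ cube t v j := by
          rcases mem_union.1 (mem_product.1 (mem_filter.1 hx).1).1 with h | h
          exacts [⟨k, hk.le, h⟩, ⟨k + 1, hk, h⟩]
        obtain ⟨j, hj, hxj⟩ := hmem
        obtain ⟨w, hw, hxw⟩ := mem_cube.1 hxj
        refine mem_image.2 ⟨(j, w), mem_product.2 ⟨mem_range.2 (by omega),
          Fintype.mem_piFinset.2 fun i => mem_range.2 (hw i)⟩, ?_⟩
        ext i
        simp only [hxw, Pi.add_apply, Pi.sub_apply]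
        omega
    _ ≤ (6 * Nat.sqrt t + 1) * side t ^ 3 :=
        card_image_le.trans_eq (by rw [card_product, card_range, card_jitters])

theorem card_shifts_mul_le (ht : 10 ^ 4 ≤ t) (F : (Fin 3 → ℝ) → Fin 3 × Fin 3) :
    #(shifts t) * (side t ^ 3 * side t ^ 3) ≤
      4 * #(gridLossPairs t F) * ((6 * Nat.sqrt t + 1) * side t ^ 3) := by
  set T := (gridLossPairs t F).image fun p => (gridVal p.1, gridVal p.2)
  set r := fun v x => ∃ k < 6 * Nat.sqrt t, x ∈ windowLosses F t v k
  have habove : ∀ v ∈ shifts t, side t ^ 3 * side t ^ 3 ≤ 4 * #(T.bipartiteAbove r v) := by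
    intro v hv
    obtain ⟨k, hk, hheavy⟩ := exists_heavy_window (F := F) ht hv
    refine hheavy.trans (Nat.mul_le_mul_left 4 (card_le_card fun x hx => ?_))
    exact (mem_bipartiteAbove r).2 ⟨windowLosses_subset ht hv hk hx, k, hk, hx⟩
  calc #(shifts t) * (side t ^ 3 * side t ^ 3)
      = ∑ v ∈ shifts t, side t ^ 3 * side t ^ 3 := by rw [sum_const, smul_eq_mul]
    _ ≤ ∑ v ∈ shifts t, 4 * #(T.bipartiteAbove r v) := sum_le_sum habove
    _ = 4 * ∑ x ∈ T, #((shifts t).bipartiteBelow r x) := by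
        rw [← mul_sum, sum_card_bipartiteAbove_eq_sum_card_bipartiteBelow]
    _ ≤ 4 * ∑ x ∈ T, (6 * Nat.sqrt t + 1) * side t ^ 3 := by
        gcongr with x
        exact card_shifts_filter_le x
    _ ≤ 4 * #(gridLossPairs t F) * ((6 * Nat.sqrt t + 1) * side t ^ 3) := by
        rw [sum_const, smul_eq_mul, ← mul_assoc]
        gcongr
        exact card_image_le

theorem card_shifts : #(shifts t) = shift t ^ 3 := by
  simp [shifts, Fintype.card_piFinset, two_mul]

theorem pow_four_le_card_gridLossPairs (ht : 10 ^ 4 ≤ t) (F : (Fin 3 → ℝ) → Fin 3 × Fin 3) :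
    t ^ 4 ≤ 10 ^ 7 * #(gridLossPairs t F) := by
  obtain ⟨h100, -, -, -, -⟩ := sqrt_bounds ht
  have hcount := card_shifts_mul_le ht F
  rw [card_shifts] at hcount
  set s := Nat.sqrt t
  set N := #(gridLossPairs t F)
  have hK : 0 < side t ^ 3 := pow_pos (by unfold side; omega) 3
  have hA : t ≤ 11 * shift t := by unfold shift; omega
  have hn : s ≤ 5 * side t := by unfold side; omega
  have ht2 : t ≤ 2 * s ^ 2 := by nlinarith [Nat.lt_succ_sqrt' t]
  have hmain : shift t ^ 3 * side t ^ 3 ≤ 28 * s * N := by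
    refine Nat.le_of_mul_le_mul_right ?_ hK
    calc shift t ^ 3 * side t ^ 3 * side t ^ 3 ≤ 4 * N * ((6 * s + 1) * side t ^ 3) := by
          simpa only [mul_assoc] using hcount
      _ = (24 * s + 4) * (N * side t ^ 3) := by ring
      _ ≤ 28 * s * (N * side t ^ 3) := by gcongr; omega
      _ = 28 * s * N * side t ^ 3 := by ring
  refine Nat.le_of_mul_le_mul_right (c := s) ?_ (by omega)
  calc t ^ 4 * s = t ^ 3 * t * s := by ring
    _ ≤ (11 * shift t) ^ 3 * (2 * s ^ 2) * s := by gcongr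
    _ = 2 * 11 ^ 3 * (s ^ 3 * shift t ^ 3) := by ring
    _ ≤ 2 * 11 ^ 3 * ((5 * side t) ^ 3 * shift t ^ 3) := by gcongr
    _ = 2 * 11 ^ 3 * 5 ^ 3 * (shift t ^ 3 * side t ^ 3) := by ring
    _ ≤ 2 * 11 ^ 3 * 5 ^ 3 * (28 * s * N) := by gcongr
    _ ≤ 10 ^ 7 * N * s := by nlinarith

end DoubleCounting

end Obstruction

/-- Claim 2.9: for all large `t` and any `F : ℝ³ → {1,2,3}²`, there are
at least `c·t⁴` ordered pairs `(P, Q)` of points of the grid `{0/t, …, t/t}³` with all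
coordinates in `[0.01, 0.99]`, `‖P − Q‖₂ ≤ 1/√t`, and `V(P) − G(F, P, Q) ≥ 0.01`
(i.e. `(P,Q)` is a `0.01`-loss for `F`). -/
theorem stmt8 :
    ∃ c : ℝ, 0 < c ∧ ∃ t₀ : ℕ, ∀ t : ℕ, t₀ ≤ t →
      ∀ F : (Fin 3 → ℝ) → Fin 3 × Fin 3,
        c * (t : ℝ) ^ 4 ≤
          ((Finset.univ : Finset ((Fin 3 → Fin (t + 1)) × (Fin 3 → Fin (t + 1)))).filter
            (fun ab =>
              (∀ i, Obstruction.gridPt t ab.1 i ∈ Set.Icc (0.01 : ℝ) 0.99) ∧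
              (∀ i, Obstruction.gridPt t ab.2 i ∈ Set.Icc (0.01 : ℝ) 0.99) ∧
              Obstruction.enorm (Obstruction.gridPt t ab.1 - Obstruction.gridPt t ab.2)
                ≤ 1 / Real.sqrt t ∧
              Obstruction.V (Obstruction.gridPt t ab.1) -
                Obstruction.G F (Obstruction.gridPt t ab.1) (Obstruction.gridPt t ab.2)
                ≥ 0.01)).card := by
  refine ⟨1 / 10 ^ 7, by norm_num, 10 ^ 4, fun t ht F => ?_⟩
  have h : ((t ^ 4 : ℕ) : ℝ) ≤ (10 ^ 7 * #(Obstruction.gridLossPairs t F) : ℕ) := by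
    exact_mod_cast Obstruction.pow_four_le_card_gridLossPairs ht F
  push_cast at h
  show _ ≤ (#(Obstruction.gridLossPairs t F) : ℝ)
  linarith
end

section
/- Let K > m ≥ 1. For any function G: T_{K,m} → (subsets of [K] of size m) such that G(P) ∈ Feas_P for all P ∈ T_{K,m}, there exists a collision-robust m-coloring F: T_{K,m} → [K]^m such that for every P ∈ T_{K,m}, the tuple F(P) is a permutation of the set G(P). -/
open scoped Classical BigOperators

namespace TreeKM

variable {K : ℕ}

/-- One step down the tree `T_{K,m}`: the current state is the pair
`(A(P), B(P))` (identified top arms, current undecided block), and a child is obtained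
by splitting `B(P)` into a top part `C` and a bottom part `B(P) \ C`. The new state is
computed exactly as in the definition of `A(·)` and `B(·)` for doubly ordered
partitions: if `|A| + |C| ≤ m` the top part is absorbed into `A` (and `B` becomes empty
when `|A| + |C| = m`, giving a leaf), and otherwise the new undecided block is `C`. -/
def step (m : ℕ) (A B C : Finset (Fin K)) : Finset (Fin K) × Finset (Fin K) :=
  if A.card + C.card ≤ m then (A ∪ C, if A.card + C.card = m then ∅ else B \ C)
  else (A, C)

/-- The state `(A(P), B(P))` of a vertex of `T_{K,m}`, encoded by the list of successive
top parts chosen along the path from the root (most recent split first). At the root,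
`A = ∅` and `B = [K]`. -/
def stateOf (m : ℕ) : List (Finset (Fin K)) → Finset (Fin K) × Finset (Fin K)
  | [] => (∅, Finset.univ)
  | C :: rest => step m (stateOf m rest).1 (stateOf m rest).2 C

/-- Validity of a path from the root in `T_{K,m}`: each successive split must cut the
current undecided block `B(P)` into two nonempty parts. -/
def Valid (m : ℕ) : List (Finset (Fin K)) → Prop
  | [] => True
  | C :: rest => Valid m rest ∧ C.Nonempty ∧ C ⊂ (stateOf m rest).2

/-- A vertex of the tree `T_{K,m}`, identified with its path from the root. -/
def Vertex (K m : ℕ) : Type := {l : List (Finset (Fin K)) // Valid m l}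

/-- `Feas_P`: the `m`-element subsets of `[K]` that arise as the set of top `m` elements
in some total ordering consistent with `P`; equivalently, the sets consisting of `A(P)`
together with `m - |A(P)|` elements of `B(P)`. -/
def Feas {K : ℕ} (m : ℕ) (P : Vertex K m) : Set (Finset (Fin K)) :=
  {S | S.card = m ∧ (stateOf m P.1).1 ⊆ S ∧ S \ (stateOf m P.1).1 ⊆ (stateOf m P.1).2}

/-- Two vertices of `T_{K,m}` are at tree distance at most `1`: they are equal, or one
is obtained from the other by one extra split. -/
def Adjacent {K m : ℕ} (P Q : Vertex K m) : Prop :=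
  P.1 = Q.1 ∨ (∃ C, P.1 = C :: Q.1) ∨ (∃ C, Q.1 = C :: P.1)

/-- An `m`-coloring `F = (f_1, …, f_m)` of `T_{K,m}` is collision-robust if whenever
`P, Q` are at tree distance at most `1` and `f_i(P) = f_j(Q)`, necessarily `i = j`. -/
def CollisionRobust {K m : ℕ} (F : Vertex K m → Fin m → Fin K) : Prop :=
  ∀ P Q : Vertex K m, Adjacent P Q → ∀ i j : Fin m, F P i = F Q j → i = j

end TreeKM

/-!
The colouring is built greedily from the root down. At the root, enumerate `G(root)` arbitrarily.
At a child `Q` of `P`, the enumeration of `G(P)` is already fixed; enumerate `G(Q)` so that every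
arm of `G(P) ∩ G(Q)` keeps its index, and send the remaining indices bijectively onto
`G(Q) \ G(P)` (both have `m - |G(P) ∩ G(Q)|` elements). Then a value shared by `P` and `Q` sits at
the same index in both, and the condition only ever involves a vertex and its parent.
-/

open Finset

def CollisionFree {α : Type*} {m : ℕ} (f g : Fin m → α) : Prop :=
  ∀ i j, f i = g j → i = j

theorem CollisionFree.symm {α : Type*} {m : ℕ} {f g : Fin m → α} (h : CollisionFree f g) :
    CollisionFree g f :=
  fun i j hij => (h j i hij.symm).symm

theorem Function.Injective.collisionFree_self {α : Type*} {m : ℕ} {f : Fin m → α}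
    (hf : Function.Injective f) : CollisionFree f f :=
  fun _ _ hij => hf hij

theorem Finset.exists_equiv_collisionFree {α : Type*} {m : ℕ} {S : Finset α} (hS : S.card = m)
    {g : Fin m → α} (hg : Function.Injective g) :
    ∃ e : Fin m ≃ S, CollisionFree (fun i => (e i : α)) g := by
  obtain ⟨e, he⟩ := Set.MapsTo.exists_equiv_extend_of_card_eq (s := {i | g i ∈ S})
    (by rw [Fintype.card_fin, hS]) (fun _ hi => hi) hg.injOn
  refine ⟨e, fun i j hij => ?_⟩
  have hj : g j ∈ S := hij ▸ (e i).2
  exact e.injective (Subtype.ext (hij.trans (he j hj).symm))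

theorem Finset.image_univ_equiv_coe {α ι : Type*} [DecidableEq α] [Fintype ι] {S : Finset α}
    (e : ι ≃ S) : univ.image (fun i => (e i : α)) = S := by
  ext x
  simpa using ⟨fun ⟨i, hi⟩ => hi ▸ (e i).2, fun hx => ⟨e.symm ⟨x, hx⟩, by simp⟩⟩

section PathEnum

variable {α β : Type*} {m : ℕ} {p : List β → Prop} (hp : ∀ c l, p (c :: l) → p l)
  (S : ∀ l, p l → Finset α) (hS : ∀ l h, (S l h).card = m)

/-- A tail-closed predicate `p` on lists is a rooted tree whose vertices are paths from the root,
most recent step first; the tail of a path is its parent. -/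
noncomputable def pathEnum : ∀ l, (h : p l) → Fin m ≃ S l h
  | [], h => ((S [] h).equivFinOfCardEq (hS [] h)).symm
  | c :: l, h =>
    (exists_equiv_collisionFree (hS (c :: l) h)
      (Subtype.val_injective.comp (pathEnum l (hp c l h)).injective)).choose

theorem collisionFree_pathEnum_cons (c : β) (l : List β) (h : p (c :: l)) :
    CollisionFree (fun i => (pathEnum hp S hS (c :: l) h i : α))
      (fun i => (pathEnum hp S hS l (hp c l h) i : α)) :=
  (exists_equiv_collisionFree (hS (c :: l) h)
    (Subtype.val_injective.comp (pathEnum hp S hS l (hp c l h)).injective)).choose_spec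

end PathEnum

theorem stmt12_general (K m : ℕ)
    (G : TreeKM.Vertex K m → Finset (Fin K)) (hG : ∀ P, G P ∈ TreeKM.Feas m P) :
    ∃ F : TreeKM.Vertex K m → Fin m → Fin K, TreeKM.CollisionRobust F ∧
      ∀ P : TreeKM.Vertex K m,
        Function.Injective (F P) ∧ Finset.image (F P) Finset.univ = G P := by
  let hp : ∀ c l, TreeKM.Valid (K := K) m (c :: l) → TreeKM.Valid m l := fun _ _ h => h.1
  let S : ∀ l, TreeKM.Valid m l → Finset (Fin K) := fun l h => G ⟨l, h⟩
  have hS : ∀ l h, (S l h).card = m := fun l h => (hG ⟨l, h⟩).1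
  let F : TreeKM.Vertex K m → Fin m → Fin K := fun P i => pathEnum hp S hS P.1 P.2 i
  have hF_inj : ∀ P, Function.Injective (F P) :=
    fun P => Subtype.val_injective.comp (pathEnum hp S hS P.1 P.2).injective
  refine ⟨F, ?_, fun P => ⟨hF_inj P, image_univ_equiv_coe _⟩⟩
  rintro ⟨l, hl⟩ ⟨l', hl'⟩ (rfl | ⟨c, rfl⟩ | ⟨c, rfl⟩)
  · exact (hF_inj _).collisionFree_self
  · exact collisionFree_pathEnum_cons hp S hS c l' hl
  · exact (collisionFree_pathEnum_cons hp S hS c l hl').symm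

/-- Lemma 2.4 of Bubeck et al.: for any selection `G` of a feasible
`m`-set `G(P) ∈ Feas_P` at each vertex `P` of `T_{K,m}`, there is a collision-robust
`m`-coloring `F` of `T_{K,m}` such that each tuple `F(P)` is a permutation
(an injective enumeration) of the set `G(P)`. -/
theorem stmt12 (K m : ℕ) (hm : 1 ≤ m) (hmK : m < K)
    (G : TreeKM.Vertex K m → Finset (Fin K)) (hG : ∀ P, G P ∈ TreeKM.Feas m P) :
    ∃ F : TreeKM.Vertex K m → Fin m → Fin K, TreeKM.CollisionRobust F ∧
      ∀ P : TreeKM.Vertex K m,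
        Function.Injective (F P) ∧ Finset.image (F P) Finset.univ = G P :=
  stmt12_general K m G hG
end

section
/- In the full-information multi-player bandit with m players and K arms, suppose the instance is p_ext, consisting of a set S₁ of arms of mean reward 1, a set S₀ of arms of mean reward 0, and remaining arms with means in [0.01, 0.99]. Fix a time step t and, for each arm a and player X, let q_a^X denote the probability that player X plays arm a at time t. Then the expected regret incurred at time t is at least c·( Σ_{a ∈ S₁} [ Π_{X=1}^m (1 − q_a^X) + ( Π_{X=1}^m (1 − q_a^X) + q_a^1 + ... + q_a^m − 1 ) ] + Σ_{a ∈ S₀} ( q_a^1 + ... + q_a^m ) ) for an absolute constant c > 0, provided the arms' observation randomness across players is independent. -/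
open scoped Classical BigOperators

namespace FullInfo

/-- Pre-sampled Bernoulli observations: at each round every player observes a full
reward vector; `ω t X i` is the Bernoulli(`p i`) observation of player `X` for arm `i`
at time `t`. -/
abbrev Outcome (T m K : ℕ) := Fin T → Fin m → Fin K → Bool

/-- Probability of a full outcome table under the instance `p`. -/
noncomputable def weight {T m K : ℕ} (p : Fin K → ℝ) (ω : Outcome T m K) : ℝ :=
  ∏ t : Fin T, ∏ X : Fin m, ∏ i : Fin K, (if ω t X i then p i else 1 - p i)

/-- A deterministic full-information strategy: each player maps its own list of past
observed reward vectors to the arm it pulls next. -/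
abbrev DetStrat (m K : ℕ) := Fin m → List (Fin K → Bool) → Fin K

/-- The observation history of player `X` before time `t`. -/
def hist {T m K : ℕ} (ω : Outcome T m K) (X : Fin m) : ℕ → List (Fin K → Bool)
  | 0 => []
  | t + 1 =>
      let h := hist ω X t
      if ht : t < T then h ++ [fun i => ω ⟨t, ht⟩ X i] else h

/-- The arm played by player `X` at time `t`. -/
def arm {T m K : ℕ} (σ : DetStrat m K) (ω : Outcome T m K) (X : Fin m) (t : Fin T) : Fin K :=
  σ X (hist ω X t.1)

/-- The reward received by player `X` at time `t`: its observed Bernoulli reward for the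
pulled arm, provided no other player pulls the same arm at the same time. -/
noncomputable def stepReward {T m K : ℕ} (σ : DetStrat m K) (ω : Outcome T m K)
    (t : Fin T) : ℝ :=
  ∑ X : Fin m,
    (if ω t X (arm σ ω X t) = true ∧ (∀ Y : Fin m, Y ≠ X → arm σ ω Y t ≠ arm σ ω X t)
      then (1 : ℝ) else 0)

/-- Total received reward over the horizon. -/
noncomputable def totalReward {T m K : ℕ} (σ : DetStrat m K) (ω : Outcome T m K) : ℝ :=
  ∑ t : Fin T, stepReward σ ω t

/-- Expected total received reward of a deterministic strategy on instance `p`. -/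
noncomputable def detER (T : ℕ) {m K : ℕ} (p : Fin K → ℝ) (σ : DetStrat m K) : ℝ :=
  ∑ ω : Outcome T m K, weight p ω * totalReward σ ω

/-- An algorithm: a distribution (shared randomness, fixed before play)
over deterministic strategies. -/
abbrev Algo (m K : ℕ) := PMF (DetStrat m K)

/-- Expected regret `R_T(A; p)` of algorithm `A` on instance `p` at horizon `T`. -/
noncomputable def regret (T : ℕ) {m K : ℕ} (A : Algo m K) (p : Fin K → ℝ) : ℝ :=
  (T : ℝ) * (∑ i : Fin K, if (i : ℕ) < m then p i else 0)
    - ∑' σ : DetStrat m K, (A σ).toReal * detER T p σ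

/-- An instance: mean rewards in `[0,1]`, sorted in decreasing order. -/
def IsInstance {K : ℕ} (p : Fin K → ℝ) : Prop :=
  (∀ i, p i ∈ Set.Icc (0 : ℝ) 1) ∧ Antitone p

/-- The gap `Δ(p) = p_m - p_{m+1}` between the `m`-th and `(m+1)`-st best arms. -/
noncomputable def gap {K : ℕ} (m : ℕ) (p : Fin K → ℝ) : ℝ :=
  if h : m < K then p ⟨m - 1, Nat.lt_of_le_of_lt (Nat.sub_le m 1) h⟩ - p ⟨m, h⟩ else 0

/-- A deterministic strategy is mean-based if each player's action depends only on the
round index and the empirical means (equivalently, the counts) of its observations. -/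
def MeanBasedStrat {m K : ℕ} (σ : DetStrat m K) : Prop :=
  ∀ (X : Fin m) (h h' : List (Fin K → Bool)), h.length = h'.length →
    (∀ i : Fin K, h.countP (fun v => v i) = h'.countP (fun v => v i)) →
    σ X h = σ X h'

/-- An algorithm is mean-based if it is supported on mean-based strategies. -/
def MeanBased {m K : ℕ} (A : Algo m K) : Prop :=
  ∀ σ ∈ A.support, MeanBasedStrat σ

end FullInfo

namespace FullInfo

/-- `q_a^X`: the probability (over the observation randomness only) that player `X`
plays arm `a` at time `t` under the deterministic strategy `σ` on instance `p`. -/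
noncomputable def armProb (T : ℕ) {m K : ℕ} (p : Fin K → ℝ) (σ : DetStrat m K)
    (t : Fin T) (X : Fin m) (a : Fin K) : ℝ :=
  ∑ ω : Outcome T m K, weight p ω * (if arm σ ω X t = a then (1 : ℝ) else 0)

/-- The expected total received reward at the single time step `t`. -/
noncomputable def stepER (T : ℕ) {m K : ℕ} (p : Fin K → ℝ) (σ : DetStrat m K)
    (t : Fin T) : ℝ :=
  ∑ ω : Outcome T m K, weight p ω * stepReward σ ω t

end FullInfo

/-!
Each player's arm at time `t` is a function of its own observations before `t`. Hence the
observations at time `t` are independent of the arm assignment `A`, so the expected step reward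
is the average of `meanReward p A`; and the arms of different players are independent, so
`∏ X, (1 - q_a^X)` is the probability that nobody plays `a`. This reduces the bound to a
deterministic inequality for every assignment `A`. Let `n_a` be the number of players on arm
`a` and `π = p_m ∈ [0.01, 0.99]`. Since `∑ n_a = m`, the regret of `A` is
`∑_a (p_a (1{a < m} - 1{n_a = 1}) + π (n_a - 1{a < m}))`, and every term is nonnegative because
the top `m` arms have means `≥ π` and the others `≤ π`. An arm of mean `1` is among the top `m`
and its term is `1 - π ≥ 0.01`, `0`, or `1 + π (n_a - 1) ≥ 0.01 (n_a - 1)` according as `n_a`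
is `0`, `1`, or larger; an arm of mean `0` is not, and its term is `π n_a ≥ 0.01 n_a`.
-/

open Finset

namespace FullInfo

section ProductWeights

variable {ι β : Type*} [Fintype ι] [DecidableEq ι] [Fintype β] {ν : ι → β → ℝ}

theorem sum_prod_mul_prod (f : ι → β → ℝ) :
    ∑ x : ι → β, (∏ i, ν i (x i)) * ∏ i, f i (x i) = ∏ i, ∑ b, ν i b * f i b := by
  simp_rw [← prod_mul_distrib]
  exact (Fintype.prod_sum fun i b => ν i b * f i b).symm

theorem sum_prod_eq_one (hν : ∀ i, ∑ b, ν i b = 1) : ∑ x : ι → β, ∏ i, ν i (x i) = 1 := by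
  rw [← Fintype.prod_sum]
  simp [hν]

theorem sum_prod_mul_apply (hν : ∀ i, ∑ b, ν i b = 1) (j : ι) (f : β → ℝ) :
    ∑ x : ι → β, (∏ i, ν i (x i)) * f (x j) = ∑ b, ν j b * f b := by
  have h := sum_prod_mul_prod (ν := ν) fun i b => if i = j then f b else 1
  have hfactor (i : ι) :
      ∑ b, ν i b * (if i = j then f b else 1) = if i = j then ∑ b, ν j b * f b else 1 := by
    split_ifs with hi
    · rw [hi]
    · simp [hν]
  rw [prod_congr rfl fun i _ => hfactor i, prod_ite_eq', if_pos (mem_univ j)] at h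
  simpa [prod_ite_eq'] using h

theorem sum_prod_mul_eq_sum_update (hν : ∀ i, ∑ b, ν i b = 1) (j : ι) (G : (ι → β) → ℝ) :
    ∑ x : ι → β, (∏ i, ν i (x i)) * G x =
      ∑ x : ι → β, (∏ i, ν i (x i)) * ∑ b, ν j b * G (Function.update x j b) := by
  have key (x : ι → β) (b : β) :
      (∏ i, ν i (Function.update x j b i)) * ν j (x j) = (∏ i, ν i (x i)) * ν j b := by
    rw [Fintype.prod_eq_mul_prod_compl j, Fintype.prod_eq_mul_prod_compl j (fun i => ν i (x i)),
      prod_congr rfl fun i hi => by rw [Function.update_of_ne (by simpa using hi)],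
      Function.update_self]
    ring
  -- `φ` swaps the resampled value `b` with the original value `x j`; `key` says it preserves
  -- the weight.
  let φ : (ι → β) × β → (ι → β) × β := fun xb => (Function.update xb.1 j xb.2, xb.1 j)
  have hφ : Function.Involutive φ := fun xb => by simp [φ]
  calc ∑ x : ι → β, (∏ i, ν i (x i)) * G x
      = ∑ xb : (ι → β) × β, (∏ i, ν i (xb.1 i)) * ν j xb.2 * G xb.1 := by
        simp [Fintype.sum_prod_type, mul_assoc, ← mul_sum, ← sum_mul, hν]
    _ = ∑ xb : (ι → β) × β, (∏ i, ν i ((φ xb).1 i)) * ν j (φ xb).2 * G (φ xb).1 :=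
        (Equiv.sum_comp (hφ.toPerm φ) _).symm
    _ = _ := by
        simp only [Fintype.sum_prod_type, φ, key, mul_sum]
        refine sum_congr rfl fun x _ => sum_congr rfl fun b _ => by ring

end ProductWeights

def bern (q : ℝ) (b : Bool) : ℝ := if b then q else 1 - q

theorem sum_bern (q : ℝ) : ∑ b, bern q b = 1 := by simp [bern]

theorem bern_nonneg {q : ℝ} (hq : q ∈ Set.Icc (0 : ℝ) 1) (b : Bool) : 0 ≤ bern q b := by
  cases b <;> simp [bern, hq.1, hq.2]

theorem sum_prod_prod_bern {ι : Type*} [Fintype ι] [DecidableEq ι] {K : ℕ} (p : Fin K → ℝ) :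
    ∑ c : ι → Fin K → Bool, ∏ X, ∏ i, bern (p i) (c X i) = 1 :=
  sum_prod_eq_one (β := Fin K → Bool) fun _ => sum_prod_eq_one fun i => sum_bern (p i)

theorem sum_prod_prod_bern_mul_ite {m K : ℕ} (p : Fin K → ℝ) (X : Fin m) (a : Fin K) :
    ∑ c : Fin m → Fin K → Bool, (∏ Y, ∏ i, bern (p i) (c Y i)) * (if c X a then 1 else 0) =
      p a := by
  calc _ = ∑ v : Fin K → Bool, (∏ i, bern (p i) (v i)) * (if v a then 1 else 0) :=
        sum_prod_mul_apply (ι := Fin m) (β := Fin K → Bool) (ν := fun _ v => ∏ i, bern (p i) (v i))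
          (fun _ => sum_prod_eq_one fun i => sum_bern (p i)) X (fun v => if v a then 1 else 0)
    _ = ∑ b, bern (p a) b * if b then 1 else 0 :=
        sum_prod_mul_apply (fun i => sum_bern (p i)) a (fun b => if b then 1 else 0)
    _ = p a := by simp [bern]

section Outcomes

variable {T m K : ℕ}

theorem weight_eq_prod_bern (p : Fin K → ℝ) (ω : Outcome T m K) :
    weight p ω = ∏ s, ∏ X, ∏ i, bern (p i) (ω s X i) := rfl

theorem sum_weight (p : Fin K → ℝ) : ∑ ω : Outcome T m K, weight p ω = 1 :=
  sum_prod_eq_one (ι := Fin T) (β := Fin m → Fin K → Bool) fun _ => sum_prod_prod_bern p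

theorem weight_nonneg {p : Fin K → ℝ} (hp : ∀ i, p i ∈ Set.Icc (0 : ℝ) 1) (ω : Outcome T m K) :
    0 ≤ weight p ω :=
  prod_nonneg fun _ _ => prod_nonneg fun _ _ => prod_nonneg fun i _ => bern_nonneg (hp i) _

theorem hist_congr {ω ω' : Outcome T m K} {X : Fin m} {n : ℕ}
    (h : ∀ s : Fin T, (s : ℕ) < n → ω s X = ω' s X) : hist ω X n = hist ω' X n := by
  induction n with
  | zero => rfl
  | succ k ih =>
    simp only [hist, ih fun s hs => h s (by omega)]
    split_ifs with hk
    · rw [h ⟨k, hk⟩ (by simp)]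
    · rfl

theorem arm_congr {σ : DetStrat m K} {ω ω' : Outcome T m K} {X : Fin m} {t : Fin T}
    (h : ∀ s < t, ω s X = ω' s X) : arm σ ω X t = arm σ ω' X t :=
  congrArg (σ X) (hist_congr fun s hs => h s hs)

noncomputable def meanReward (p : Fin K → ℝ) (A : Fin m → Fin K) : ℝ :=
  ∑ X, p (A X) * if ∀ Y, Y ≠ X → A Y ≠ A X then 1 else 0

theorem stepER_eq_sum_meanReward (p : Fin K → ℝ) (σ : DetStrat m K) (t : Fin T) :
    stepER T p σ t = ∑ ω, weight p ω * meanReward p (fun X => arm σ ω X t) := by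
  have hresample := sum_prod_mul_eq_sum_update (ι := Fin T) (β := Fin m → Fin K → Bool)
    (fun _ => sum_prod_prod_bern p) t (fun ω => stepReward σ ω t)
  refine hresample.trans (sum_congr rfl fun ω _ => congrArg _ ?_)
  have harm : ∀ c X, arm σ (Function.update ω t c) X t = arm σ ω X t :=
    fun c X => arm_congr fun s hs => by rw [Function.update_of_ne hs.ne]
  simp only [stepReward, harm, Function.update_self, mul_sum]
  rw [sum_comm]
  refine sum_congr rfl fun X _ => ?_
  by_cases hX : ∀ Y, Y ≠ X → arm σ ω Y t ≠ arm σ ω X t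
  · simp only [and_iff_left hX, if_pos hX, mul_one]
    exact sum_prod_prod_bern_mul_ite p X _
  · simp [hX]

theorem sum_weight_mul_prod_arm (p : Fin K → ℝ) (σ : DetStrat m K) (t : Fin T)
    (g : Fin m → Fin K → ℝ) :
    ∑ ω, weight p ω * ∏ X, g X (arm σ ω X t) = ∏ X, ∑ ω, weight p ω * g X (arm σ ω X t) := by
  set μ : (Fin T → Fin K → Bool) → ℝ := fun u => ∏ s, ∏ i, bern (p i) (u s i)
  set col : Fin m → (Fin T → Fin K → Bool) → Fin K := fun X u => arm σ (fun s _ => u s) X t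
  have hμ : ∑ u, μ u = 1 := sum_prod_prod_bern p
  have hcols (F : (Fin m → Fin T → Fin K → Bool) → ℝ) :
      ∑ ω : Outcome T m K, weight p ω * F (fun X s => ω s X) = ∑ u, (∏ X, μ (u X)) * F u :=
    Fintype.sum_equiv (Equiv.piComm _) _ _ fun ω => by
      rw [weight_eq_prod_bern, prod_comm]
      rfl
  have harm (ω : Outcome T m K) (X : Fin m) : arm σ ω X t = col X (fun s => ω s X) :=
    arm_congr fun _ _ => rfl
  calc ∑ ω, weight p ω * ∏ X, g X (arm σ ω X t)
      = ∑ ω : Outcome T m K, weight p ω * ∏ X, g X (col X (fun s => ω s X)) :=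
        sum_congr rfl fun ω _ => congrArg _ (prod_congr rfl fun X _ => congrArg (g X) (harm ω X))
    _ = ∏ X, ∑ v, μ v * g X (col X v) :=
        (hcols fun u => ∏ X, g X (col X (u X))).trans
          (sum_prod_mul_prod (ν := fun _ => μ) fun X v => g X (col X v))
    _ = ∏ X, ∑ ω, weight p ω * g X (arm σ ω X t) := by
        refine prod_congr rfl fun X _ => ?_
        rw [← sum_prod_mul_apply (fun _ => hμ) X, ← hcols fun u => g X (col X (u X))]
        simp only [harm]

end Outcomes

/-- The share of arm `a` in the regret of an assignment, where `n` players pick `a`, `top` means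
`a < m` and `π = p_m`: summing over `a` gives `OPT - meanReward + π (m - m)`. -/
theorem arm_regret_bound {x π : ℝ} (n : ℕ) {top one zero : Prop} [Decidable top] [Decidable one]
    [Decidable zero] (hπ : π ∈ Set.Icc (0.01 : ℝ) 0.99) (hx : x ∈ Set.Icc (0 : ℝ) 1)
    (htop : top → π ≤ x) (hbot : ¬top → x ≤ π) (hone : one → x = 1) (hzero : zero → x = 0) :
    (1 / 100) * ((if one then 2 * (if n = 0 then 1 else 0) + (n : ℝ) - 1 else 0) +
        if zero then (n : ℝ) else 0)
      ≤ x * ((if top then 1 else 0) - if n = 1 then 1 else 0) + π * (n - if top then 1 else 0) := by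
  obtain ⟨hπ0, hπ1⟩ := hπ
  obtain ⟨hx0, hx1⟩ := hx
  rcases n with _ | _ | n
  all_goals
    by_cases ht : top <;> by_cases h1 : one <;> by_cases h0 : zero <;>
      simp only [ht, h1, h0, true_implies, false_implies, not_true, not_false_eq_true, if_true,
        if_false] at htop hbot hone hzero ⊢ <;>
      push_cast <;> nlinarith

section Assignments

variable {m K : ℕ}

theorem prod_one_sub_ite_eq (A : Fin m → Fin K) (a : Fin K) :
    ∏ X, (1 - if A X = a then 1 else 0 : ℝ) = if #{X | A X = a} = 0 then 1 else 0 := by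
  have hX (X : Fin m) : (1 - if A X = a then 1 else 0 : ℝ) = if A X ≠ a then 1 else 0 := by
    split_ifs <;> simp_all
  rw [prod_congr rfl fun X _ => hX X, prod_boole]
  simp [filter_eq_empty_iff]

theorem forall_ne_iff_card_eq_one (A : Fin m → Fin K) (X : Fin m) :
    (∀ Y, Y ≠ X → A Y ≠ A X) ↔ #{Y | A Y = A X} = 1 := by
  rw [card_eq_one_iff_existsUnique]
  constructor
  · intro h
    exact ⟨X, by simp, fun Y hY => by_contra fun hYX => h Y hYX (by simpa using hY)⟩
  · rintro ⟨Z, -, hZ⟩ Y hYX hY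
    exact hYX ((hZ Y (by simpa using hY)).trans (hZ X (by simp)).symm)

theorem meanReward_eq_sum_arms (p : Fin K → ℝ) (A : Fin m → Fin K) :
    meanReward p A = ∑ a, p a * if #{X | A X = a} = 1 then 1 else 0 := by
  simp only [meanReward, forall_ne_iff_card_eq_one]
  rw [← sum_fiberwise' univ A (fun a => p a * if #{X | A X = a} = 1 then 1 else 0)]
  refine sum_congr rfl fun a _ => ?_
  rw [sum_const, nsmul_eq_mul]
  split_ifs with h <;> simp [h]

noncomputable def regretProxy (S₁ S₀ : Finset (Fin K)) (A : Fin m → Fin K) : ℝ :=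
  ∑ a ∈ S₁, (2 * ∏ X, (1 - if A X = a then 1 else 0) + ∑ X, (if A X = a then 1 else 0) - 1) +
    ∑ a ∈ S₀, ∑ X, if A X = a then 1 else 0

theorem regretProxy_le {p : Fin K → ℝ} (hp : IsInstance p) (hmK : m < K)
    (hπ : p ⟨m, hmK⟩ ∈ Set.Icc (0.01 : ℝ) 0.99) {S₁ S₀ : Finset (Fin K)}
    (h1 : ∀ a ∈ S₁, p a = 1) (h0 : ∀ a ∈ S₀, p a = 0) (A : Fin m → Fin K) :
    (1 / 100) * regretProxy S₁ S₀ A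
      ≤ (∑ i : Fin K, if (i : ℕ) < m then p i else 0) - meanReward p A := by
  set n : Fin K → ℕ := fun a => #{X | A X = a}
  have hproxy : regretProxy S₁ S₀ A =
      ∑ a, ((if a ∈ S₁ then 2 * (if n a = 0 then 1 else 0) + (n a : ℝ) - 1 else 0) +
        if a ∈ S₀ then (n a : ℝ) else 0) := by
    simp only [regretProxy, prod_one_sub_ite_eq, sum_boole, sum_add_distrib, sum_ite_mem,
      univ_inter, n]
  have hcount : ∑ a, (n a : ℝ) = m := by
    rw [← Nat.cast_sum, ← card_eq_sum_card_fiberwise fun _ _ => mem_univ _, card_univ,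
      Fintype.card_fin]
  have htop : ∑ a : Fin K, (if (a : ℕ) < m then 1 else 0 : ℝ) = m := by
    rw [sum_boole, Fin.card_filter_val_lt, min_eq_right hmK.le]
  calc (1 / 100) * regretProxy S₁ S₀ A
      = ∑ a, (1 / 100) *
          ((if a ∈ S₁ then 2 * (if n a = 0 then 1 else 0) + (n a : ℝ) - 1 else 0) +
            if a ∈ S₀ then (n a : ℝ) else 0) := by rw [hproxy, mul_sum]
    _ ≤ ∑ a, (p a * ((if (a : ℕ) < m then 1 else 0) - if n a = 1 then 1 else 0) +
          p ⟨m, hmK⟩ * (n a - if (a : ℕ) < m then 1 else 0)) :=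
        sum_le_sum fun a _ => arm_regret_bound (n a) hπ (hp.1 a)
          (fun ha => hp.2 (Fin.le_def.2 ha.le)) (fun ha => hp.2 (Fin.le_def.2 (not_lt.1 ha)))
          (h1 a) (h0 a)
    _ = (∑ i : Fin K, if (i : ℕ) < m then p i else 0) - meanReward p A := by
        simp only [meanReward_eq_sum_arms, sum_add_distrib, mul_sub, sum_sub_distrib, ← mul_sum,
          hcount, htop]
        simp only [mul_ite, mul_one, mul_zero, n]
        ring

end Assignments

section Expectations

variable {T m K : ℕ} (p : Fin K → ℝ) (σ : DetStrat m K) (t : Fin T)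

theorem sum_weight_mul_count (a : Fin K) :
    ∑ ω, weight p ω * ∑ X, (if arm σ ω X t = a then 1 else 0) = ∑ X, armProb T p σ t X a := by
  simp only [mul_sum]
  exact sum_comm

theorem sum_weight_mul_prod_one_sub (a : Fin K) :
    ∑ ω, weight p ω * ∏ X, (1 - if arm σ ω X t = a then 1 else 0) =
      ∏ X, (1 - armProb T p σ t X a) := by
  rw [sum_weight_mul_prod_arm p σ t fun _ b => 1 - if b = a then 1 else 0]
  refine prod_congr rfl fun X _ => ?_
  simp only [mul_sub, mul_one, sum_sub_distrib, sum_weight]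
  rfl

theorem sum_weight_mul_regretProxy (S₁ S₀ : Finset (Fin K)) :
    ∑ ω, weight p ω * regretProxy S₁ S₀ (fun X => arm σ ω X t) =
      ∑ a ∈ S₁, ((∏ X, (1 - armProb T p σ t X a)) +
          ((∏ X, (1 - armProb T p σ t X a)) + (∑ X, armProb T p σ t X a) - 1)) +
        ∑ a ∈ S₀, ∑ X, armProb T p σ t X a := by
  simp only [regretProxy, mul_add, mul_sum S₁, mul_sum S₀, sum_add_distrib (s := univ)]
  congr 1 <;> rw [sum_comm] <;> refine sum_congr rfl fun a _ => ?_
  · simp only [mul_sub, mul_add, mul_one, sum_sub_distrib, sum_add_distrib,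
      mul_left_comm _ (2 : ℝ), ← mul_sum, sum_weight_mul_prod_one_sub, sum_weight_mul_count,
      sum_weight]
    ring
  · exact sum_weight_mul_count p σ t a

end Expectations

end FullInfo

/-- the regret lower bound (2.19): on an instance with a set `S₁` of
arms of mean `1`, a set `S₀` of arms of mean `0`, remaining means in `[0.01, 0.99]`, and
`(m+1)`-st largest mean in `[0.01, 0.99]`, the expected regret incurred at any single
time step `t` is at least
`c·(Σ_{a∈S₁}[Π_X(1-q_a^X) + (Π_X(1-q_a^X) + Σ_X q_a^X - 1)] + Σ_{a∈S₀} Σ_X q_a^X)`. -/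
theorem stmt16 :
    ∃ c : ℝ, 0 < c ∧ ∀ T m K : ℕ, 1 ≤ m → ∀ hmK : m < K,
      ∀ p : Fin K → ℝ, FullInfo.IsInstance p →
      ∀ S₁ S₀ : Finset (Fin K), Disjoint S₁ S₀ →
        (∀ a ∈ S₁, p a = 1) → (∀ a ∈ S₀, p a = 0) →
        (∀ a : Fin K, a ∉ S₁ → a ∉ S₀ → p a ∈ Set.Icc (0.01 : ℝ) 0.99) →
        p ⟨m, hmK⟩ ∈ Set.Icc (0.01 : ℝ) 0.99 →
        ∀ σ : FullInfo.DetStrat m K, ∀ t : Fin T,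
          (∑ i : Fin K, if (i : ℕ) < m then p i else 0) - FullInfo.stepER T p σ t ≥
            c * ((∑ a ∈ S₁,
                    ((∏ X : Fin m, (1 - FullInfo.armProb T p σ t X a)) +
                      ((∏ X : Fin m, (1 - FullInfo.armProb T p σ t X a)) +
                        (∑ X : Fin m, FullInfo.armProb T p σ t X a) - 1)))
                + ∑ a ∈ S₀, ∑ X : Fin m, FullInfo.armProb T p σ t X a) := by
  refine ⟨1 / 100, by norm_num, ?_⟩
  intro T m K _ hmK p hp S₁ S₀ _ h1 h0 _ hπ σ t
  rw [ge_iff_le, ← FullInfo.sum_weight_mul_regretProxy, mul_sum,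
    FullInfo.stepER_eq_sum_meanReward]
  calc ∑ ω, 1 / 100 *
        (FullInfo.weight p ω * FullInfo.regretProxy S₁ S₀ fun X => FullInfo.arm σ ω X t)
      ≤ ∑ ω, FullInfo.weight p ω * ((∑ i : Fin K, if (i : ℕ) < m then p i else 0) -
          FullInfo.meanReward p fun X => FullInfo.arm σ ω X t) :=
        sum_le_sum fun ω _ => by
          rw [mul_left_comm]
          exact mul_le_mul_of_nonneg_left (FullInfo.regretProxy_le hp hmK hπ h1 h0 _)
            (FullInfo.weight_nonneg hp.1 ω)
    _ = _ := by simp only [mul_sub, sum_sub_distrib, ← sum_mul, FullInfo.sum_weight, one_mul]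
end
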